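/- arXiv:1810.09389 — 11 statements merged into one kernel-verified Lean document; each statement's English description precedes it below -/
import Mathlib

section
/- Let V = EuclideanSpace ℝ (Fin 3) and Λ its exterior algebra. For any finite list of pairs of vectors (u₁,w₁),…,(u_k,w_k) in V, let T := (E(u₁)∘E*(w₁))∘⋯∘(E(u_k)∘E*(w_k)) and let T' := (E*(w_k)∘E(u_k))∘⋯∘(E*(w₁)∘E(u₁)) be the product of the reversed factors in reversed order. Then for every p ∈ V there exist a scalar α ∈ ℝ and a vector q ∈ V such that T ∘ (id + E(p)) ∘ T' = α•id + E(q); that is, the sandwich transformation maps the operator image of a paravector (a scalar plus a vector) to the operator image of a paravector. -/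
open scoped RealInnerProductSpace

noncomputable section

/-- Left exterior multiplication by a vector on the exterior algebra of `ℝ³`. -/
def wedgeOp (v : EuclideanSpace ℝ (Fin 3)) :
    ExteriorAlgebra ℝ (EuclideanSpace ℝ (Fin 3)) →ₗ[ℝ]
      ExteriorAlgebra ℝ (EuclideanSpace ℝ (Fin 3)) :=
  LinearMap.mulLeft ℝ (ExteriorAlgebra.ι ℝ v)

/-- Left contraction (interior product) along the functional `⟪v, ·⟫`. -/
def contrOp (v : EuclideanSpace ℝ (Fin 3)) :
    ExteriorAlgebra ℝ (EuclideanSpace ℝ (Fin 3)) →ₗ[ℝ]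
      ExteriorAlgebra ℝ (EuclideanSpace ℝ (Fin 3)) :=
  CliffordAlgebra.contractLeft (innerₗ (EuclideanSpace ℝ (Fin 3)) v)

lemma contr_wedge_apply (w q : EuclideanSpace ℝ (Fin 3))
    (x : ExteriorAlgebra ℝ (EuclideanSpace ℝ (Fin 3))) :
    contrOp w (wedgeOp q x) = ⟪w, q⟫ • x - wedgeOp q (contrOp w x) := by
  simp [contrOp, wedgeOp, CliffordAlgebra.contractLeft_ι_mul]

lemma contr_contr_apply (w : EuclideanSpace ℝ (Fin 3))
    (x : ExteriorAlgebra ℝ (EuclideanSpace ℝ (Fin 3))) :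
    contrOp w (contrOp w x) = 0 := by
  simp [contrOp, CliffordAlgebra.contractLeft_contractLeft]

lemma wedge_wedge_apply (u : EuclideanSpace ℝ (Fin 3))
    (x : ExteriorAlgebra ℝ (EuclideanSpace ℝ (Fin 3))) :
    wedgeOp u (wedgeOp u x) = 0 := by
  simp [wedgeOp, ← mul_assoc, ExteriorAlgebra.ι_sq_zero]

lemma wedgeOp_smul (c : ℝ) (u : EuclideanSpace ℝ (Fin 3)) :
    wedgeOp (c • u) = c • wedgeOp u := by
  refine LinearMap.ext fun x => ?_
  simp [wedgeOp, smul_mul_assoc]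

set_option maxHeartbeats 1000000 in
/-- key single-factor step -/
lemma step (u w q : EuclideanSpace ℝ (Fin 3)) (α : ℝ) :
    (wedgeOp u ∘ₗ contrOp w) ∘ₗ (α • LinearMap.id + wedgeOp q) ∘ₗ (contrOp w ∘ₗ wedgeOp u)
      = (⟪w, q⟫ * ⟪w, u⟫) • wedgeOp u := by
  refine LinearMap.ext fun x => ?_
  have hy0 : contrOp w (contrOp w (wedgeOp u x)) = 0 := by
    rw [contr_wedge_apply, map_sub, map_smul, contr_wedge_apply, contr_contr_apply,
      map_zero, sub_zero, sub_self]
  have hmid : contrOp w (α • contrOp w (wedgeOp u x) + wedgeOp q (contrOp w (wedgeOp u x)))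
      = ⟪w, q⟫ • contrOp w (wedgeOp u x) := by
    rw [map_add, map_smul, hy0, smul_zero, zero_add, contr_wedge_apply, hy0, map_zero,
      sub_zero]
  have hwy : wedgeOp u (contrOp w (wedgeOp u x)) = ⟪w, u⟫ • wedgeOp u x := by
    rw [contr_wedge_apply, map_sub, map_smul, wedge_wedge_apply, sub_zero]
  calc ((wedgeOp u ∘ₗ contrOp w) ∘ₗ (α • LinearMap.id + wedgeOp q) ∘ₗ
        (contrOp w ∘ₗ wedgeOp u)) x
      = wedgeOp u (contrOp w (α • contrOp w (wedgeOp u x)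
          + wedgeOp q (contrOp w (wedgeOp u x)))) := by
        simp only [LinearMap.comp_apply, LinearMap.add_apply, LinearMap.smul_apply,
          LinearMap.id_apply]
    _ = ⟪w, q⟫ • wedgeOp u (contrOp w (wedgeOp u x)) := by rw [hmid, map_smul]
    _ = (⟪w, q⟫ * ⟪w, u⟫) • wedgeOp u x := by rw [hwy, smul_smul]
    _ = ((⟪w, q⟫ * ⟪w, u⟫) • wedgeOp u) x := (LinearMap.smul_apply _ _ _).symm

lemma aux (L : List (EuclideanSpace ℝ (Fin 3) × EuclideanSpace ℝ (Fin 3))) :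
    ∀ (α : ℝ) (q : EuclideanSpace ℝ (Fin 3)),
    ∃ (β : ℝ) (r : EuclideanSpace ℝ (Fin 3)),
      (L.map fun uw => wedgeOp uw.1 ∘ₗ contrOp uw.2).prod ∘ₗ
          (α • LinearMap.id + wedgeOp q) ∘ₗ
          ((L.map fun uw => contrOp uw.2 ∘ₗ wedgeOp uw.1).reverse).prod
        = β • LinearMap.id + wedgeOp r := by
  induction L with
  | nil =>
      intro α q
      exact ⟨α, q, by simp [Module.End.one_eq_id]⟩
  | cons uw rest ih =>
      intro α q
      obtain ⟨β, r, hβ⟩ := ih α q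
      refine ⟨0, (⟪uw.2, r⟫ * ⟪uw.2, uw.1⟫) • uw.1, ?_⟩
      simp only [List.map_cons, List.prod_cons, List.reverse_cons, List.prod_append,
        List.prod_cons, List.prod_nil, mul_one]
      have : ∀ (A B C D E : ExteriorAlgebra ℝ (EuclideanSpace ℝ (Fin 3)) →ₗ[ℝ]
          ExteriorAlgebra ℝ (EuclideanSpace ℝ (Fin 3))),
          (A * B) ∘ₗ C ∘ₗ (D * E) = A ∘ₗ (B ∘ₗ C ∘ₗ D) ∘ₗ E := by
        intro A B C D E
        rfl
      rw [show ((wedgeOp uw.1 ∘ₗ contrOp uw.2) *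
            (rest.map fun uw => wedgeOp uw.1 ∘ₗ contrOp uw.2).prod) ∘ₗ
            (α • LinearMap.id + wedgeOp q) ∘ₗ
            ((rest.map fun uw => contrOp uw.2 ∘ₗ wedgeOp uw.1).reverse.prod *
              (contrOp uw.2 ∘ₗ wedgeOp uw.1))
          = (wedgeOp uw.1 ∘ₗ contrOp uw.2) ∘ₗ
              ((rest.map fun uw => wedgeOp uw.1 ∘ₗ contrOp uw.2).prod ∘ₗ
                (α • LinearMap.id + wedgeOp q) ∘ₗ
                (rest.map fun uw => contrOp uw.2 ∘ₗ wedgeOp uw.1).reverse.prod) ∘ₗ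
              (contrOp uw.2 ∘ₗ wedgeOp uw.1) from rfl]
      rw [hβ, step, wedgeOp_smul, zero_smul, zero_add]

/-- sandwiching the operator image of a paravector between a product
of factors `E(uᵢ)∘E*(wᵢ)` and the product of the reversed factors in reversed order
yields the operator image of a paravector. -/
theorem paravector_sandwich (L : List (EuclideanSpace ℝ (Fin 3) × EuclideanSpace ℝ (Fin 3)))
    (p : EuclideanSpace ℝ (Fin 3)) :
    ∃ (α : ℝ) (q : EuclideanSpace ℝ (Fin 3)),
      (L.map fun uw => wedgeOp uw.1 ∘ₗ contrOp uw.2).prod ∘ₗ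
          (LinearMap.id + wedgeOp p) ∘ₗ
          ((L.map fun uw => contrOp uw.2 ∘ₗ wedgeOp uw.1).reverse).prod
        = α • LinearMap.id + wedgeOp q := by
  have := aux L 1 p
  rwa [one_smul] at this

end
end

section
/- Let n ∈ EuclideanSpace ℝ (Fin 3) with ‖n‖ = 1, and set N := E*(n)∘E(n) − E(n)∘E*(n). Then for every p ∈ EuclideanSpace ℝ (Fin 3), N ∘ (id + E(p)) ∘ N = id + E(p − 2⟨p,n⟩•n). Equivalently, the sandwich by N sends the operator image of the point 1 + p to the operator image of its reflection 1 + p' in the plane through the origin with unit normal n, where p' = p − 2(p·n)n. -/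
open scoped RealInnerProductSpace

noncomputable section

lemma contr_wedge (v w : EuclideanSpace ℝ (Fin 3))
    (x : ExteriorAlgebra ℝ (EuclideanSpace ℝ (Fin 3))) :
    contrOp v (wedgeOp w x) = ⟪v, w⟫ • x - wedgeOp w (contrOp v x) := by
  simp [contrOp, wedgeOp, CliffordAlgebra.contractLeft_ι_mul]

lemma wedge_wedge_same (v : EuclideanSpace ℝ (Fin 3))
    (x : ExteriorAlgebra ℝ (EuclideanSpace ℝ (Fin 3))) :
    wedgeOp v (wedgeOp v x) = 0 := by
  simp [wedgeOp, ← mul_assoc, ExteriorAlgebra.ι_sq_zero]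

lemma contr_contr_same (v : EuclideanSpace ℝ (Fin 3))
    (x : ExteriorAlgebra ℝ (EuclideanSpace ℝ (Fin 3))) :
    contrOp v (contrOp v x) = 0 := by
  simp [contrOp, CliffordAlgebra.contractLeft_contractLeft]

lemma wedge_wedge_swap (v w : EuclideanSpace ℝ (Fin 3))
    (x : ExteriorAlgebra ℝ (EuclideanSpace ℝ (Fin 3))) :
    wedgeOp v (wedgeOp w x) = -(wedgeOp w (wedgeOp v x)) := by
  have h : ExteriorAlgebra.ι ℝ v * ExteriorAlgebra.ι ℝ w
      = -(ExteriorAlgebra.ι ℝ w * ExteriorAlgebra.ι ℝ v) := by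
    linear_combination (norm := noncomm_ring) ExteriorAlgebra.ι_add_mul_swap (R := ℝ) v w
  simp [wedgeOp, ← mul_assoc, h]

lemma wedge_sub_smul (v w : EuclideanSpace ℝ (Fin 3)) (c : ℝ)
    (x : ExteriorAlgebra ℝ (EuclideanSpace ℝ (Fin 3))) :
    wedgeOp (v - c • w) x = wedgeOp v x - c • wedgeOp w x := by
  simp [wedgeOp, sub_mul, smul_mul_assoc]

/-- reflection of a point in the plane through the origin with
unit normal `n`, as a sandwich by `N = E*(n)∘E(n) − E(n)∘E*(n)`. -/
theorem reflection_of_point (n : EuclideanSpace ℝ (Fin 3)) (hn : ‖n‖ = 1)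
    (p : EuclideanSpace ℝ (Fin 3)) :
    (contrOp n ∘ₗ wedgeOp n - wedgeOp n ∘ₗ contrOp n) ∘ₗ
        (LinearMap.id + wedgeOp p) ∘ₗ
        (contrOp n ∘ₗ wedgeOp n - wedgeOp n ∘ₗ contrOp n)
      = LinearMap.id + wedgeOp (p - (2 * ⟪p, n⟫) • n) := by
  have hnn : ⟪n, n⟫ = 1 := by
    rw [real_inner_self_eq_norm_sq, hn]; norm_num
  have hnw : ∀ x, contrOp n (wedgeOp n x) = x - wedgeOp n (contrOp n x) := by
    intro x; rw [contr_wedge, hnn, one_smul]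
  have hnp : ∀ x, contrOp n (wedgeOp p x) = ⟪n, p⟫ • x - wedgeOp p (contrOp n x) :=
    contr_wedge n p
  have hpn : ⟪p, n⟫ = ⟪n, p⟫ := real_inner_comm n p
  refine LinearMap.ext fun x => ?_
  simp only [LinearMap.comp_apply, LinearMap.sub_apply, LinearMap.add_apply,
    LinearMap.id_apply, wedge_sub_smul, hpn]
  simp only [map_sub, map_add, map_smul, map_neg, hnw, hnp, wedge_wedge_same,
    contr_contr_same, wedge_wedge_swap n p, map_zero, smul_sub, smul_add, smul_neg,
    smul_zero, sub_zero, zero_sub, neg_neg, neg_zero, add_zero, zero_add]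
  module

end
end

section
/- Let u, v, p ∈ EuclideanSpace ℝ (Fin 3), let U := E(u)∘E*(v) and Ũ := E*(v)∘E(u), and let h ∈ ℝ. Then (id + h•U) ∘ E(p) ∘ (id + h•Ũ) = (1 + h⟨v,u⟩) • ( E(p) + h⟨p,v⟩ • E(u) ). In particular the exponential sandwich e^{tU} E(p) e^{tŨ} rescales E(p) by e^{t⟨v,u⟩} and adds a component in the direction u. -/
/-!
Write `C = E*(v)`. The operators `E(u)`, `E(p)`, `C` obey the canonical anticommutation relations
`E(u)² = 0`, `E(u) E(p) = -E(p) E(u)`, `C E(w) + E(w) C = ⟪v, w⟫`, `C² = 0`, and these alone give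
the identity: in the expansion of the sandwich the linear term `E(u) C E(p) + E(p) C E(u)` reduces to
`⟪v, p⟫ E(u) + ⟪v, u⟫ E(p)`, and the quadratic term `E(u) C E(p) C E(u)` to `⟪v, p⟫ ⟪v, u⟫ E(u)`.
-/

open scoped RealInnerProductSpace

noncomputable section

theorem sandwich_eq_of_anticomm {R A : Type*} [CommRing R] [Ring A] [Algebra R A] {a b c : A}
    {α β : R} (ha : a * a = 0) (hab : a * b = -(b * a)) (hca : c * a + a * c = α • 1)
    (hcb : c * b + b * c = β • 1) (hc : c * c = 0) (h : R) :
    (1 + h • (a * c)) * b * (1 + h • (c * a)) = (1 + h * α) • (b + (h * β) • a) := by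
  have hca' : c * a = α • 1 - a * c := eq_sub_of_add_eq hca
  have hcb' : c * b = β • 1 - b * c := eq_sub_of_add_eq hcb
  have hacb : a * c * b = β • a + b * a * c := by
    rw [mul_assoc, hcb', mul_sub, mul_smul_comm, mul_one, ← mul_assoc, hab, neg_mul,
      sub_neg_eq_add]
  have hbca : b * c * a = α • b - b * a * c := by
    rw [mul_assoc, hca', mul_sub, mul_smul_comm, mul_one, mul_assoc]
  have haca : a * c * a = α • a := by
    rw [mul_assoc, hca', mul_sub, mul_smul_comm, mul_one, ← mul_assoc, ha, zero_mul, sub_zero]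
  calc (1 + h • (a * c)) * b * (1 + h • (c * a))
      = b + h • (a * c * b + b * c * a) + (h * h) • (a * c * b * c * a) := by
        simp only [add_mul, mul_add, one_mul, mul_one, smul_mul_assoc, mul_smul_comm, smul_smul,
          smul_add, mul_assoc]
        abel
    _ = (1 + h * α) • (b + (h * β) • a) := by
        rw [hacb, hbca, add_mul, add_mul, smul_mul_assoc, smul_mul_assoc, haca,
          mul_assoc (b * a) c c, hc, mul_zero, zero_mul, add_zero]
        module

namespace ExteriorAlgebra

open CliffordAlgebra

variable {R M : Type*} [CommRing R] [AddCommGroup M] [Module R M]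

theorem lmul_ι_mul_self (m : M) :
    Algebra.lmul R _ (ι R m) * Algebra.lmul R _ (ι R m) = 0 := by
  rw [← map_mul (Algebra.lmul R _), ι_sq_zero, map_zero]

theorem lmul_ι_mul_lmul_ι (m n : M) :
    Algebra.lmul R _ (ι R m) * Algebra.lmul R _ (ι R n) =
      -(Algebra.lmul R _ (ι R n) * Algebra.lmul R _ (ι R m)) := by
  rw [← map_mul (Algebra.lmul R _), ← map_mul (Algebra.lmul R _), ← map_neg,
    eq_neg_of_add_eq_zero_left (ι_add_mul_swap m n)]

theorem contractLeft_mul_lmul_ι_add (d : Module.Dual R M) (m : M) :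
    contractLeft d * Algebra.lmul R _ (ι R m) + Algebra.lmul R _ (ι R m) * contractLeft d =
      d m • 1 := by
  ext x
  simp [contractLeft_ι_mul]

theorem contractLeft_mul_self (d : Module.Dual R M) :
    (contractLeft d : ExteriorAlgebra R M →ₗ[R] ExteriorAlgebra R M) * contractLeft d = 0 :=
  LinearMap.ext (contractLeft_contractLeft d)

end ExteriorAlgebra

/-- `(id + h•U) ∘ E(p) ∘ (id + h•Ũ) = (1 + h⟨v,u⟩) • (E(p) + h⟨p,v⟩•E(u))`
for `U = E(u)∘E*(v)` and `Ũ = E*(v)∘E(u)`. -/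
theorem sandwich_of_vector_op (u v p : EuclideanSpace ℝ (Fin 3)) (h : ℝ) :
    (LinearMap.id + h • (wedgeOp u ∘ₗ contrOp v)) ∘ₗ wedgeOp p ∘ₗ
        (LinearMap.id + h • (contrOp v ∘ₗ wedgeOp u))
      = (1 + h * ⟪v, u⟫) • (wedgeOp p + (h * ⟪p, v⟫) • wedgeOp u) := by
  have hsandwich := sandwich_eq_of_anticomm (ExteriorAlgebra.lmul_ι_mul_self u)
    (ExteriorAlgebra.lmul_ι_mul_lmul_ι u p)
    (ExteriorAlgebra.contractLeft_mul_lmul_ι_add (innerₗ _ v) u)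
    (ExteriorAlgebra.contractLeft_mul_lmul_ι_add (innerₗ _ v) p)
    (ExteriorAlgebra.contractLeft_mul_self (innerₗ _ v)) h
  rwa [innerₗ_apply_apply, innerₗ_apply_apply, real_inner_comm p v] at hsandwich

end
end

section
/- (Shear transformation of points.) Let u, v, p ∈ EuclideanSpace ℝ (Fin 3) with ⟨u,v⟩ = 0, let C := E(u)∘E*(v) − E*(v)∘E(u), and let t ∈ ℝ. Then (id + (t/2)•C) ∘ (id + E(p)) ∘ (id − (t/2)•C) = id + E(p + t⟨p,v⟩•u). (Since C² = 0 when ⟨u,v⟩ = 0, the operator id + (t/2)•C equals e^{tC/2}, so this is the shear e^{t[u,v*]/2} P e^{t[u,v*]~/2} of the paper, which fixes the weight of the point and shears its location in the plane spanned by u and v.) -/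
open scoped RealInnerProductSpace

noncomputable section

/-!
If `⟪u, v⟫ = 0`, the operators `E(u)`, `E(p)`, `E*(v)` satisfy the canonical anticommutation
relations with `E*(v) E(u) = - E(u) E*(v)`, so the generator `C` equals `2 E(u) E*(v)` and
`C² = 0`. Conjugating `id + E(p)` by the unipotent `id + (t/2) C` therefore truncates after the
first-order term `(t/2) [C, E(p)]`, and `[E(u) E*(v), E(p)] = ⟪v, p⟫ E(u)`.
-/

theorem one_add_mul_one_add_mul_one_sub {S : Type*} [Ring S] {a b : S} (ha : a * a = 0)
    (hab : ⁅a, b⁆ * a = 0) :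
    (1 + a) * ((1 + b) * (1 - a)) = 1 + b + ⁅a, b⁆ := by
  rw [Ring.lie_def] at hab ⊢
  have haba : a * b * a = 0 := by
    rw [← sub_add_cancel (a * b) (b * a), add_mul, hab, mul_assoc, ha, mul_zero, add_zero]
  calc (1 + a) * ((1 + b) * (1 - a)) = 1 + b + (a * b - b * a) - a * b * a - a * a := by
        noncomm_ring
    _ = 1 + b + (a * b - b * a) := by rw [haba, ha, sub_zero, sub_zero]

section CanonicalAnticommutation

variable {R S : Type*} [CommRing R] [Ring S] [Algebra R S] {e f δ : S} {c : R}

theorem lie_mul_eq_smul_of_anticomm (hef : e * f + f * e = 0) (hδf : δ * f + f * δ = c • 1) :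
    ⁅e * δ, f⁆ = c • e := by
  rw [Ring.lie_def, mul_assoc, eq_sub_of_add_eq hδf, mul_sub, mul_smul_one, ← mul_assoc,
    ← mul_assoc, sub_sub, ← add_mul, hef, zero_mul, sub_zero]

theorem conj_one_add_of_anticomm (he : e * e = 0) (hef : e * f + f * e = 0)
    (hδe : δ * e + e * δ = 0) (hδf : δ * f + f * δ = c • 1) (s : R) :
    (1 + s • ⁅e, δ⁆) * ((1 + f) * (1 - s • ⁅e, δ⁆)) = 1 + f + (2 * s * c) • e := by
  have hgen : s • ⁅e, δ⁆ = (2 * s) • (e * δ) := by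
    rw [Ring.lie_def, eq_neg_of_add_eq_zero_left hδe, sub_neg_eq_add, ← two_smul R, smul_smul,
      mul_comm]
  have heδe : e * δ * e = 0 := by
    rw [mul_assoc, eq_neg_of_add_eq_zero_left hδe, mul_neg, ← mul_assoc, he, zero_mul, neg_zero]
  have hlie : ⁅s • ⁅e, δ⁆, f⁆ = (2 * s * c) • e := by
    rw [hgen, Ring.lie_def, smul_mul_assoc, mul_smul_comm, ← smul_sub, ← Ring.lie_def,
      lie_mul_eq_smul_of_anticomm hef hδf, smul_smul]
  refine hlie ▸ one_add_mul_one_add_mul_one_sub ?_ ?_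
  · rw [hgen, smul_mul_smul, ← mul_assoc (e * δ), heδe, zero_mul, smul_zero]
  · rw [hlie, hgen, smul_mul_smul, ← mul_assoc e, he, zero_mul, smul_zero]

end CanonicalAnticommutation

namespace ExteriorAlgebra

open LinearMap

variable {R M : Type*} [CommRing R] [AddCommGroup M] [Module R M]

theorem mulLeft_ι_mul_self (m : M) : mulLeft R (ι R m) * mulLeft R (ι R m) = 0 := by
  ext x
  simp [← mul_assoc]

theorem mulLeft_ι_mul_add_mul_swap (m n : M) :
    mulLeft R (ι R m) * mulLeft R (ι R n) + mulLeft R (ι R n) * mulLeft R (ι R m) = 0 := by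
  ext x
  simp [← mul_assoc, ← add_mul, ι_add_mul_swap]

theorem contractLeft_mul_mulLeft_ι_add (d : Module.Dual R M) (m : M) :
    CliffordAlgebra.contractLeft d * mulLeft R (ι R m)
      + mulLeft R (ι R m) * CliffordAlgebra.contractLeft d = d m • 1 :=
  LinearMap.ext fun x => by simp [CliffordAlgebra.contractLeft_ι_mul]

end ExteriorAlgebra

/-- shear transformation of points, generated by
`C = E(u)∘E*(v) − E*(v)∘E(u)` with `⟨u,v⟩ = 0`. -/
theorem shear_of_point (u v p : EuclideanSpace ℝ (Fin 3)) (huv : ⟪u, v⟫ = 0) (t : ℝ) :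
    (LinearMap.id + (t / 2) • (wedgeOp u ∘ₗ contrOp v - contrOp v ∘ₗ wedgeOp u)) ∘ₗ
        (LinearMap.id + wedgeOp p) ∘ₗ
        (LinearMap.id - (t / 2) • (wedgeOp u ∘ₗ contrOp v - contrOp v ∘ₗ wedgeOp u))
      = LinearMap.id + wedgeOp (p + (t * ⟪p, v⟫) • u) := by
  have hvu : contrOp v * wedgeOp u + wedgeOp u * contrOp v = 0 := by
    rw [contrOp, wedgeOp, ExteriorAlgebra.contractLeft_mul_mulLeft_ι_add, innerₗ_apply_apply,
      real_inner_comm, huv, zero_smul]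
  refine (conj_one_add_of_anticomm (ExteriorAlgebra.mulLeft_ι_mul_self u)
    (ExteriorAlgebra.mulLeft_ι_mul_add_mul_swap u p) hvu
    (ExteriorAlgebra.contractLeft_mul_mulLeft_ι_add _ p) (t / 2)).trans ?_
  rw [innerₗ_apply_apply, real_inner_comm, mul_div_cancel₀ t two_ne_zero]
  refine LinearMap.ext fun x => ?_
  simp [wedgeOp, add_mul, add_assoc]

end
end

section
/- (Rotation of points.) Let u, v, p ∈ EuclideanSpace ℝ (Fin 3) with ⟨u,v⟩ = 0 and ‖u‖ = ‖v‖ = 1. Define I₁ := (1/2)•( (E(u)+E*(u))∘(E(v)+E*(v)) − (E(v)+E*(v))∘(E(u)+E*(u)) ) and I₂ := (1/2)•( (E(u)−E*(u))∘(E(v)−E*(v)) − (E(v)−E*(v))∘(E(u)−E*(u)) ). For θ ∈ ℝ set Ψ := (cos(θ/2)•id + sin(θ/2)•I₁) ∘ (cos(θ/2)•id − sin(θ/2)•I₂) and Ψ' := (cos(θ/2)•id − sin(θ/2)•I₁) ∘ (cos(θ/2)•id + sin(θ/2)•I₂). Writing p_u := ⟨p,u⟩, p_v := ⟨p,v⟩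 and p⊥ := p − p_u•u − p_v•v, we have Ψ ∘ E(p) ∘ Ψ' = E( p⊥ + (cos θ · p_u + sin θ · p_v)•u + (cos θ · p_v − sin θ · p_u)•v ). (Since I₁² = I₂² = −id and I₁, I₂ commute, Ψ = e^{θR/2} with R = [u,v*] − [v,u*] and Ψ' = Ψ~, so this is the paper's circular rotation by angle θ in the plane of u and v.) -/
/-!
The operators `γ⁺(x) = E(x) + E*(x)` and `γ⁻(x) = E(x) - E*(x)` satisfy the Clifford relations
for `‖x‖²` and `-‖x‖²` respectively, and every `γ⁺(x)` anticommutes with every `γ⁻(y)`. Hence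
`I₁ = γ⁺(u) γ⁺(v)` and `I₂ = γ⁻(u) γ⁻(v)` square to `-1`, commute with each other, and each
commutes with the other family. So `Ψ (·) Ψ'` acts on `γ⁺(p)` as the spin rotor `exp (θ I₁ / 2)`
alone and on `γ⁻(p)` as `exp (-θ I₂ / 2)` alone, and both rotate `p` by `θ` in the `(u, v)`-plane;
since `E(p) = (γ⁺(p) + γ⁻(p)) / 2`, so does `Ψ`.
-/

open scoped RealInnerProductSpace

noncomputable section

/-- The operator `I₁ = (1/2)[E(u)+E*(u), E(v)+E*(v)]`. -/
def rotGen1 (u v : EuclideanSpace ℝ (Fin 3)) :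
    ExteriorAlgebra ℝ (EuclideanSpace ℝ (Fin 3)) →ₗ[ℝ]
      ExteriorAlgebra ℝ (EuclideanSpace ℝ (Fin 3)) :=
  (1 / 2 : ℝ) • ((wedgeOp u + contrOp u) ∘ₗ (wedgeOp v + contrOp v)
    - (wedgeOp v + contrOp v) ∘ₗ (wedgeOp u + contrOp u))

/-- The operator `I₂ = (1/2)[E(u)−E*(u), E(v)−E*(v)]`. -/
def rotGen2 (u v : EuclideanSpace ℝ (Fin 3)) :
    ExteriorAlgebra ℝ (EuclideanSpace ℝ (Fin 3)) →ₗ[ℝ]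
      ExteriorAlgebra ℝ (EuclideanSpace ℝ (Fin 3)) :=
  (1 / 2 : ℝ) • ((wedgeOp u - contrOp u) ∘ₗ (wedgeOp v - contrOp v)
    - (wedgeOp v - contrOp v) ∘ₗ (wedgeOp u - contrOp u))

theorem mul_mul_mul_eq_of_commute_right {M : Type*} [Monoid M] {a b a' b' m : M}
    (hm : Commute b m) (ha' : Commute b a') (hb : b * b' = 1) :
    a * b * m * (a' * b') = a * m * a' := by
  calc a * b * m * (a' * b') = a * (b * m) * a' * b' := by simp only [mul_assoc]
    _ = a * m * (b * a') * b' := by rw [hm.eq]; simp only [mul_assoc]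
    _ = a * m * a' * (b * b') := by rw [ha'.eq]; simp only [mul_assoc]
    _ = a * m * a' := by rw [hb, mul_one]

theorem mul_mul_mul_eq_of_commute_left {M : Type*} [Monoid M] {a b a' b' m : M}
    (hb : Commute a b) (hm : Commute a m) (ha : a * a' = 1) :
    a * b * m * (a' * b') = b * m * b' := by
  calc a * b * m * (a' * b') = b * (a * m) * a' * b' := by rw [hb.eq]; simp only [mul_assoc]
    _ = b * m * (a * a') * b' := by rw [hm.eq]; simp only [mul_assoc]
    _ = b * m * b' := by rw [ha, mul_one]

section Rotor

variable {A : Type*} [Ring A]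

theorem commute_mul_of_anticomm {a b x : A} (ha : a * x = -(x * a)) (hb : b * x = -(x * b)) :
    Commute (a * b) x := by
  rw [Commute, SemiconjBy, mul_assoc, hb, mul_neg, ← mul_assoc, ha, neg_mul, neg_neg, mul_assoc]

variable [Algebra ℝ A]

/-- `exp (θ J / 2)` when `J * J = -1`. -/
def halfRotor (J : A) (θ : ℝ) : A := Real.cos (θ / 2) • 1 + Real.sin (θ / 2) • J

theorem halfRotor_neg (J : A) (θ : ℝ) :
    halfRotor J (-θ) = Real.cos (θ / 2) • 1 - Real.sin (θ / 2) • J := by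
  simp [halfRotor, neg_div, sub_eq_add_neg]

theorem Commute.halfRotor_left {J x : A} (h : Commute J x) (θ : ℝ) :
    Commute (halfRotor J θ) x :=
  ((Commute.one_left x).smul_left _).add_left (h.smul_left _)

theorem Commute.halfRotor {J K : A} (h : Commute J K) (θ φ : ℝ) :
    Commute (halfRotor J θ) (halfRotor K φ) :=
  (((h.halfRotor_left θ).symm.halfRotor_left φ)).symm

theorem half_smul_sub_of_anticomm {a b : A} (h : b * a = -(a * b)) :
    (1 / 2 : ℝ) • (a * b - b * a) = a * b := by
  rw [h, sub_neg_eq_add]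
  module

variable {J : A} (hJ : J * J = -1)
include hJ

theorem halfRotor_mul_halfRotor (θ φ : ℝ) :
    halfRotor J θ * halfRotor J φ = halfRotor J (θ + φ) := by
  simp only [halfRotor, add_div, Real.cos_add, Real.sin_add, mul_add, add_mul, smul_mul_assoc,
    mul_smul_comm, one_mul, mul_one, hJ, smul_neg]
  module

theorem halfRotor_mul_halfRotor_neg (θ : ℝ) : halfRotor J θ * halfRotor J (-θ) = 1 := by
  rw [halfRotor_mul_halfRotor hJ, add_neg_cancel]
  simp [halfRotor]

theorem halfRotor_conj_of_commute {x : A} (h : Commute J x) (θ : ℝ) :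
    halfRotor J θ * x * halfRotor J (-θ) = x := by
  rw [(h.halfRotor_left θ).eq, mul_assoc, halfRotor_mul_halfRotor_neg hJ, mul_one]

theorem halfRotor_conj_of_anticomm {x : A} (h : J * x = -(x * J)) (θ : ℝ) :
    halfRotor J θ * x * halfRotor J (-θ) = Real.cos θ • x + Real.sin θ • (J * x) := by
  have hx : x * halfRotor J (-θ) = halfRotor J θ * x := by
    simp only [halfRotor, neg_div, Real.cos_neg, Real.sin_neg, neg_smul, mul_add, add_mul,
      mul_neg, mul_smul_comm, smul_mul_assoc, mul_one, one_mul, h, smul_neg]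
  rw [mul_assoc, hx, ← mul_assoc, halfRotor_mul_halfRotor hJ, halfRotor, add_self_div_two]
  simp only [add_mul, smul_mul_assoc, one_mul]

end Rotor

section Clifford

variable {V A : Type*} [NormedAddCommGroup V] [InnerProductSpace ℝ V] [Ring A] [Algebra ℝ A]

def planeRot (u v : V) (θ : ℝ) (p : V) : V :=
  (p - ⟪p, u⟫ • u - ⟪p, v⟫ • v) + (Real.cos θ * ⟪p, u⟫ + Real.sin θ * ⟪p, v⟫) • u
    + (Real.cos θ * ⟪p, v⟫ - Real.sin θ * ⟪p, u⟫) • v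

def IsCliffordMap (g : V →ₗ[ℝ] A) (ε : ℝ) : Prop :=
  ∀ x y, g x * g y + g y * g x = (ε * (2 * ⟪x, y⟫)) • 1

variable {g : V →ₗ[ℝ] A} {ε : ℝ} (hg : IsCliffordMap g ε)
include hg

theorem anticomm_of_inner_eq_zero {x y : V} (hxy : ⟪x, y⟫ = 0) : g x * g y = -(g y * g x) :=
  eq_neg_of_add_eq_zero_left (by simpa [hxy] using hg x y)

theorem mul_self_of_norm_eq_one {x : V} (hx : ‖x‖ = 1) : g x * g x = ε • 1 := by
  have h := hg x x
  rw [real_inner_self_eq_norm_sq, hx, ← two_smul ℝ] at h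
  linear_combination (norm := module) (1 / 2 : ℝ) • h

variable {u v : V}

theorem commute_mul_of_inner_eq_zero {w : V} (hwu : ⟪w, u⟫ = 0) (hwv : ⟪w, v⟫ = 0) :
    Commute (g u * g v) (g w) :=
  commute_mul_of_anticomm (anticomm_of_inner_eq_zero hg (real_inner_comm w u ▸ hwu))
    (anticomm_of_inner_eq_zero hg (real_inner_comm w v ▸ hwv))

variable (huv : ⟪u, v⟫ = 0) (hu : ‖u‖ = 1) (hv : ‖v‖ = 1)
include huv hu hv

theorem mul_mul_self_eq_neg_one (hε : ε * ε = 1) : g u * g v * (g u * g v) = -1 := by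
  rw [mul_assoc, ← mul_assoc (g v), anticomm_of_inner_eq_zero hg (real_inner_comm u v ▸ huv),
    neg_mul, mul_neg, ← mul_assoc, ← mul_assoc, mul_self_of_norm_eq_one hg hu,
    mul_assoc, mul_self_of_norm_eq_one hg hv]
  simp [smul_smul, hε]

variable (hε : ε = 1 ∨ ε = -1) (θ : ℝ)
include hε

theorem halfRotor_conj_fst :
    halfRotor (g u * g v) (ε * θ) * g u * halfRotor (g u * g v) (-(ε * θ))
      = Real.cos θ • g u - Real.sin θ • g v := by
  have hJu : g u * g v * g u = -(ε • g v) := by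
    rw [mul_assoc, anticomm_of_inner_eq_zero hg (real_inner_comm u v ▸ huv), mul_neg,
      ← mul_assoc, mul_self_of_norm_eq_one hg hu, smul_one_mul]
  have huJ : g u * (g u * g v) = ε • g v := by
    rw [← mul_assoc, mul_self_of_norm_eq_one hg hu, smul_one_mul]
  rw [halfRotor_conj_of_anticomm (mul_mul_self_eq_neg_one hg huv hu hv (mul_self_eq_one_iff.mpr hε))
    (by rw [hJu, huJ]), hJu]
  rcases hε with rfl | rfl <;> simp [sub_eq_add_neg]

theorem halfRotor_conj_snd :
    halfRotor (g u * g v) (ε * θ) * g v * halfRotor (g u * g v) (-(ε * θ))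
      = Real.cos θ • g v + Real.sin θ • g u := by
  have hJv : g u * g v * g v = ε • g u := by
    rw [mul_assoc, mul_self_of_norm_eq_one hg hv, mul_smul_one]
  have hvJ : g v * (g u * g v) = -(ε • g u) := by
    rw [← mul_assoc, anticomm_of_inner_eq_zero hg (real_inner_comm u v ▸ huv), neg_mul, hJv]
  rw [halfRotor_conj_of_anticomm (mul_mul_self_eq_neg_one hg huv hu hv (mul_self_eq_one_iff.mpr hε))
    (by rw [hJv, hvJ, neg_neg]), hJv]
  rcases hε with rfl | rfl <;> simp

theorem halfRotor_conj_eq_planeRot (x : V) :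
    halfRotor (g u * g v) (ε * θ) * g x * halfRotor (g u * g v) (-(ε * θ))
      = g (planeRot u v θ x) := by
  set w := x - ⟪x, u⟫ • u - ⟪x, v⟫ • v
  have hwu : ⟪w, u⟫ = 0 := by
    simp [w, inner_sub_left, real_inner_smul_left, huv, real_inner_comm u v, hu]
  have hwv : ⟪w, v⟫ = 0 := by simp [w, inner_sub_left, real_inner_smul_left, huv, hv]
  have hx : g x = g w + ⟪x, u⟫ • g u + ⟪x, v⟫ • g v := by
    simp only [w, map_sub, map_smul]; abel
  have hplane : planeRot u v θ x = w + (Real.cos θ * ⟪x, u⟫ + Real.sin θ * ⟪x, v⟫) • u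
      + (Real.cos θ * ⟪x, v⟫ - Real.sin θ * ⟪x, u⟫) • v := rfl
  rw [hx, hplane, mul_add, mul_add, add_mul, add_mul, mul_smul_comm, mul_smul_comm,
    smul_mul_assoc, smul_mul_assoc,
    halfRotor_conj_of_commute (mul_mul_self_eq_neg_one hg huv hu hv (mul_self_eq_one_iff.mpr hε))
      (commute_mul_of_inner_eq_zero hg hwu hwv),
    halfRotor_conj_fst hg huv hu hv hε, halfRotor_conj_snd hg huv hu hv hε]
  simp only [map_add, map_smul]
  module

end Clifford

section ExteriorAlgebra

local notation "V3" => EuclideanSpace ℝ (Fin 3)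
local notation "Λ" => ExteriorAlgebra ℝ (EuclideanSpace ℝ (Fin 3))

def wedgeOpₗ : V3 →ₗ[ℝ] Module.End ℝ Λ := (LinearMap.mul ℝ Λ).comp (ExteriorAlgebra.ι ℝ)

def contrOpₗ : V3 →ₗ[ℝ] Module.End ℝ Λ := CliffordAlgebra.contractLeft.comp (innerₗ V3)

theorem wedgeOpₗ_apply (x : V3) : wedgeOpₗ x = wedgeOp x := rfl

theorem contrOpₗ_apply (x : V3) : contrOpₗ x = contrOp x := rfl

theorem wedgeOp_anticomm (x y : V3) : wedgeOp x * wedgeOp y + wedgeOp y * wedgeOp x = 0 := by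
  refine LinearMap.ext fun z => ?_
  simp only [wedgeOp, Module.End.mul_apply, LinearMap.add_apply, LinearMap.mulLeft_apply,
    LinearMap.zero_apply, ← mul_assoc, ← add_mul, ExteriorAlgebra.ι_add_mul_swap, zero_mul]

theorem contrOp_anticomm (x y : V3) : contrOp x * contrOp y + contrOp y * contrOp x = 0 := by
  refine LinearMap.ext fun z => ?_
  simp only [contrOp, Module.End.mul_apply, LinearMap.add_apply, LinearMap.zero_apply]
  rw [CliffordAlgebra.contractLeft_comm, neg_add_cancel]

theorem contrOp_wedgeOp_anticomm (x y : V3) :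
    contrOp x * wedgeOp y + wedgeOp y * contrOp x = ⟪x, y⟫ • 1 := by
  refine LinearMap.ext fun z => ?_
  simp [contrOp, wedgeOp, CliffordAlgebra.contractLeft_ι_mul]

def wedgeAddContr : V3 →ₗ[ℝ] Module.End ℝ Λ := wedgeOpₗ + contrOpₗ

def wedgeSubContr : V3 →ₗ[ℝ] Module.End ℝ Λ := wedgeOpₗ - contrOpₗ

theorem isCliffordMap_wedgeAddContr : IsCliffordMap wedgeAddContr 1 := fun x y => by
  simp only [wedgeAddContr, LinearMap.add_apply, wedgeOpₗ_apply, contrOpₗ_apply, add_mul, mul_add]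
  linear_combination (norm := module) wedgeOp_anticomm x y + contrOp_anticomm x y
    + contrOp_wedgeOp_anticomm x y + contrOp_wedgeOp_anticomm y x
    + real_inner_comm x y • (1 : Module.End ℝ Λ)

theorem isCliffordMap_wedgeSubContr : IsCliffordMap wedgeSubContr (-1) := fun x y => by
  simp only [wedgeSubContr, LinearMap.sub_apply, wedgeOpₗ_apply, contrOpₗ_apply, sub_mul, mul_sub]
  linear_combination (norm := module) wedgeOp_anticomm x y + contrOp_anticomm x y
    - contrOp_wedgeOp_anticomm x y - contrOp_wedgeOp_anticomm y x
    - real_inner_comm x y • (1 : Module.End ℝ Λ)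

theorem wedgeAddContr_wedgeSubContr_anticomm (x y : V3) :
    wedgeAddContr x * wedgeSubContr y + wedgeSubContr y * wedgeAddContr x = 0 := by
  simp only [wedgeAddContr, wedgeSubContr, LinearMap.add_apply, LinearMap.sub_apply,
    wedgeOpₗ_apply, contrOpₗ_apply, add_mul, mul_add, sub_mul, mul_sub]
  linear_combination (norm := module) wedgeOp_anticomm x y - contrOp_anticomm x y
    + contrOp_wedgeOp_anticomm x y - contrOp_wedgeOp_anticomm y x
    - real_inner_comm x y • (1 : Module.End ℝ Λ)

theorem wedgeOp_eq_half_smul (x : V3) :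
    wedgeOp x = (1 / 2 : ℝ) • (wedgeAddContr x + wedgeSubContr x) := by
  simp only [wedgeAddContr, wedgeSubContr, LinearMap.add_apply, LinearMap.sub_apply,
    wedgeOpₗ_apply, contrOpₗ_apply]
  module

theorem commute_wedgeAddContr_mul_wedgeAddContr_wedgeSubContr (u v x : V3) :
    Commute (wedgeAddContr u * wedgeAddContr v) (wedgeSubContr x) :=
  commute_mul_of_anticomm (eq_neg_of_add_eq_zero_left (wedgeAddContr_wedgeSubContr_anticomm u x))
    (eq_neg_of_add_eq_zero_left (wedgeAddContr_wedgeSubContr_anticomm v x))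

theorem commute_wedgeSubContr_mul_wedgeSubContr_wedgeAddContr (u v x : V3) :
    Commute (wedgeSubContr u * wedgeSubContr v) (wedgeAddContr x) :=
  commute_mul_of_anticomm (eq_neg_of_add_eq_zero_right (wedgeAddContr_wedgeSubContr_anticomm x u))
    (eq_neg_of_add_eq_zero_right (wedgeAddContr_wedgeSubContr_anticomm x v))

theorem commute_wedgeAddContr_mul_wedgeSubContr_mul (u v : V3) :
    Commute (wedgeAddContr u * wedgeAddContr v) (wedgeSubContr u * wedgeSubContr v) :=
  (commute_wedgeAddContr_mul_wedgeAddContr_wedgeSubContr u v u).mul_right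
    (commute_wedgeAddContr_mul_wedgeAddContr_wedgeSubContr u v v)

theorem rotGen1_eq {u v : V3} (huv : ⟪u, v⟫ = 0) :
    rotGen1 u v = wedgeAddContr u * wedgeAddContr v :=
  half_smul_sub_of_anticomm
    (anticomm_of_inner_eq_zero isCliffordMap_wedgeAddContr (real_inner_comm u v ▸ huv))

theorem rotGen2_eq {u v : V3} (huv : ⟪u, v⟫ = 0) :
    rotGen2 u v = wedgeSubContr u * wedgeSubContr v :=
  half_smul_sub_of_anticomm
    (anticomm_of_inner_eq_zero isCliffordMap_wedgeSubContr (real_inner_comm u v ▸ huv))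

def planeRotor (u v : V3) (θ : ℝ) : Module.End ℝ Λ :=
  halfRotor (wedgeAddContr u * wedgeAddContr v) θ
    * halfRotor (wedgeSubContr u * wedgeSubContr v) (-θ)

variable {u v : V3} (huv : ⟪u, v⟫ = 0) (hu : ‖u‖ = 1) (hv : ‖v‖ = 1) (θ : ℝ)
include huv hu hv

theorem planeRotor_conj_wedgeAddContr (x : V3) :
    planeRotor u v θ * wedgeAddContr x * planeRotor u v (-θ)
      = wedgeAddContr (planeRot u v θ x) := by
  have hK := mul_mul_self_eq_neg_one isCliffordMap_wedgeSubContr huv hu hv (by norm_num)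
  have hJK := commute_wedgeAddContr_mul_wedgeSubContr_mul u v
  rw [planeRotor, planeRotor, mul_mul_mul_eq_of_commute_right
    ((commute_wedgeSubContr_mul_wedgeSubContr_wedgeAddContr u v x).halfRotor_left _)
    (hJK.symm.halfRotor _ _)
    (halfRotor_mul_halfRotor_neg hK _)]
  simpa using halfRotor_conj_eq_planeRot isCliffordMap_wedgeAddContr huv hu hv (Or.inl rfl) θ x

theorem planeRotor_conj_wedgeSubContr (x : V3) :
    planeRotor u v θ * wedgeSubContr x * planeRotor u v (-θ)
      = wedgeSubContr (planeRot u v θ x) := by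
  have hJ := mul_mul_self_eq_neg_one isCliffordMap_wedgeAddContr huv hu hv (one_mul 1)
  have hJK := commute_wedgeAddContr_mul_wedgeSubContr_mul u v
  rw [planeRotor, planeRotor, mul_mul_mul_eq_of_commute_left (hJK.halfRotor _ _)
    ((commute_wedgeAddContr_mul_wedgeAddContr_wedgeSubContr u v x).halfRotor_left _)
    (halfRotor_mul_halfRotor_neg hJ _)]
  simpa using halfRotor_conj_eq_planeRot isCliffordMap_wedgeSubContr huv hu hv (Or.inr rfl) θ x

theorem planeRotor_conj_wedgeOp (x : V3) :
    planeRotor u v θ * wedgeOp x * planeRotor u v (-θ) = wedgeOp (planeRot u v θ x) := by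
  rw [wedgeOp_eq_half_smul, wedgeOp_eq_half_smul, mul_smul_comm, smul_mul_assoc, mul_add, add_mul,
    planeRotor_conj_wedgeAddContr huv hu hv, planeRotor_conj_wedgeSubContr huv hu hv]

end ExteriorAlgebra

/-- circular rotation of points by an angle `θ` in the plane of `u` and `v`. -/
theorem rotation_of_point (u v p : EuclideanSpace ℝ (Fin 3))
    (huv : ⟪u, v⟫ = 0) (hu : ‖u‖ = 1) (hv : ‖v‖ = 1) (θ : ℝ) :
    ((Real.cos (θ / 2) • LinearMap.id + Real.sin (θ / 2) • rotGen1 u v) ∘ₗ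
          (Real.cos (θ / 2) • LinearMap.id - Real.sin (θ / 2) • rotGen2 u v)) ∘ₗ
        wedgeOp p ∘ₗ
        ((Real.cos (θ / 2) • LinearMap.id - Real.sin (θ / 2) • rotGen1 u v) ∘ₗ
          (Real.cos (θ / 2) • LinearMap.id + Real.sin (θ / 2) • rotGen2 u v))
      = wedgeOp ((p - ⟪p, u⟫ • u - ⟪p, v⟫ • v)
          + (Real.cos θ * ⟪p, u⟫ + Real.sin θ * ⟪p, v⟫) • u
          + (Real.cos θ * ⟪p, v⟫ - Real.sin θ * ⟪p, u⟫) • v) := by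
  have hΨ : (Real.cos (θ / 2) • LinearMap.id + Real.sin (θ / 2) • rotGen1 u v) ∘ₗ
      (Real.cos (θ / 2) • LinearMap.id - Real.sin (θ / 2) • rotGen2 u v) = planeRotor u v θ := by
    rw [planeRotor, halfRotor_neg, rotGen1_eq huv, rotGen2_eq huv]; rfl
  have hΨ' : (Real.cos (θ / 2) • LinearMap.id - Real.sin (θ / 2) • rotGen1 u v) ∘ₗ
      (Real.cos (θ / 2) • LinearMap.id + Real.sin (θ / 2) • rotGen2 u v) = planeRotor u v (-θ) := by
    rw [planeRotor, neg_neg, halfRotor_neg, rotGen1_eq huv, rotGen2_eq huv]; rfl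
  rw [hΨ, hΨ', ← planeRot, ← planeRotor_conj_wedgeOp huv hu hv, Module.End.mul_eq_comp,
    Module.End.mul_eq_comp, LinearMap.comp_assoc]

end
end

section
/- (Translation of points.) Let v, p ∈ EuclideanSpace ℝ (Fin 3). Then (id + (1/2)•E(v)) ∘ (id + E(p)) ∘ (id + (1/2)•E(v)) = id + E(p + v). (Since E(v)² = 0, the operator id + (1/2)•E(v) equals e^{E(v)/2}, so sandwiching by the square root of the translation translates the point located at p with unit weight to the point located at p + v with unit weight.) -/
open scoped RealInnerProductSpace

noncomputable section

/-- translation of points: sandwiching the point `id + E(p)` between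
two copies of `id + (1/2)•E(v)` translates it to `id + E(p + v)`. -/
theorem translation_of_point (v p : EuclideanSpace ℝ (Fin 3)) :
    (LinearMap.id + (1 / 2 : ℝ) • wedgeOp v) ∘ₗ (LinearMap.id + wedgeOp p) ∘ₗ
        (LinearMap.id + (1 / 2 : ℝ) • wedgeOp v)
      = LinearMap.id + wedgeOp (p + v) := by
  have hvv : ExteriorAlgebra.ι ℝ v * ExteriorAlgebra.ι ℝ v = 0 :=
    ExteriorAlgebra.ι_sq_zero v
  have hanti : ExteriorAlgebra.ι ℝ v * ExteriorAlgebra.ι ℝ p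
      = - (ExteriorAlgebra.ι ℝ p * ExteriorAlgebra.ι ℝ v) := by
    have h := ExteriorAlgebra.ι_add_mul_swap (R := ℝ) v p
    rw [eq_neg_iff_add_eq_zero]; exact h
  have h0 : ∀ x, ExteriorAlgebra.ι ℝ v * (ExteriorAlgebra.ι ℝ v * x) = 0 := by
    intro x; rw [← mul_assoc, hvv, zero_mul]
  have h1 : ∀ x, ExteriorAlgebra.ι ℝ v * (ExteriorAlgebra.ι ℝ p * (ExteriorAlgebra.ι ℝ v * x)) = 0 := by
    intro x; rw [← mul_assoc, hanti, neg_mul, mul_assoc, h0, mul_zero, neg_zero]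
  have h2 : ∀ x, ExteriorAlgebra.ι ℝ v * (ExteriorAlgebra.ι ℝ p * x)
      = -(ExteriorAlgebra.ι ℝ p * (ExteriorAlgebra.ι ℝ v * x)) := by
    intro x; rw [← mul_assoc, hanti, neg_mul, mul_assoc]
  apply LinearMap.ext; intro x
  simp only [LinearMap.comp_apply, LinearMap.add_apply, LinearMap.id_apply,
    LinearMap.smul_apply, wedgeOp, LinearMap.mulLeft_apply, map_add, add_mul,
    mul_add, smul_add, h0, h1, h2, smul_zero, smul_neg, smul_smul, mul_smul_comm]
  module


end
end

section
/- (Cotranslation of points.) Work in Λ := ExteriorAlgebra ℝ (EuclideanSpace ℝ (Fin 3)) with standard basis vectors e₀, e₁, e₂. For p ∈ EuclideanSpace ℝ (Fin 3), write Ω := ι(e₀)*ι(e₁)*ι(e₂) and ⋆p := p₀ • ι(e₁)*ι(e₂) + p₁ • ι(e₂)*ι(e₀) + p₂ • ι(e₀)*ι(e₁), the Hodge dual of p (here pᵢ are the coordinates of p). Then for all p, v ∈ EuclideanSpace ℝ (Fin 3), the following identity holds in Λ: (1 + (1/2)•ι(v)) * (Ω + ⋆p) * (1 + (1/2)•ι(v))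 = Ω + ⋆p + ⟨p,v⟩ • Ω. (Since Ω + ⋆p is the Hodge dual of the paravector 1 + p, applying the Hodge star to both sides shows that the cotranslation ⋆[e^{v/2}(⋆P)e^{v/2}] of the point P = 1 + p equals 1 + ⟨p,v⟩ + p, i.e., cotranslation by v adds the weight ⟨p,v⟩ to the point without changing its vector part.) -/
open scoped RealInnerProductSpace

noncomputable section

/-- The standard basis vectors of `EuclideanSpace ℝ (Fin 3)`. -/
def stdBasis (i : Fin 3) : EuclideanSpace ℝ (Fin 3) := EuclideanSpace.single i 1

/-- The unit 3-vector `Ω = e₀ ∧ e₁ ∧ e₂` in the exterior algebra. -/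
def unitTrivector : ExteriorAlgebra ℝ (EuclideanSpace ℝ (Fin 3)) :=
  ExteriorAlgebra.ι ℝ (stdBasis 0) * ExteriorAlgebra.ι ℝ (stdBasis 1) *
    ExteriorAlgebra.ι ℝ (stdBasis 2)

/-- The Hodge dual bivector `⋆p = p₀ e₁∧e₂ + p₁ e₂∧e₀ + p₂ e₀∧e₁` of a vector `p`. -/
def hodgeDualVec (p : EuclideanSpace ℝ (Fin 3)) :
    ExteriorAlgebra ℝ (EuclideanSpace ℝ (Fin 3)) :=
  p 0 • (ExteriorAlgebra.ι ℝ (stdBasis 1) * ExteriorAlgebra.ι ℝ (stdBasis 2)) +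
    p 1 • (ExteriorAlgebra.ι ℝ (stdBasis 2) * ExteriorAlgebra.ι ℝ (stdBasis 0)) +
    p 2 • (ExteriorAlgebra.ι ℝ (stdBasis 0) * ExteriorAlgebra.ι ℝ (stdBasis 1))

lemma ι_swap (x y : EuclideanSpace ℝ (Fin 3)) :
    ExteriorAlgebra.ι ℝ y * ExteriorAlgebra.ι ℝ x = -(ExteriorAlgebra.ι ℝ x * ExteriorAlgebra.ι ℝ y) := by
  have := ExteriorAlgebra.ι_add_mul_swap (R := ℝ) x y
  exact eq_neg_of_add_eq_zero_right this

lemma v_decomp (v : EuclideanSpace ℝ (Fin 3)) :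
    v = v 0 • stdBasis 0 + v 1 • stdBasis 1 + v 2 • stdBasis 2 := by
  ext i
  fin_cases i <;> simp [stdBasis, EuclideanSpace.single_apply]

set_option maxHeartbeats 2000000 in
/-- cotranslation of points. Sandwiching the Hodge dual `Ω + ⋆p` of the
paravector `1 + p` between two copies of `1 + (1/2)•ι(v)` adds `⟨p,v⟩•Ω` to it. -/
theorem cotranslation_of_point (p v : EuclideanSpace ℝ (Fin 3)) :
    (1 + (1 / 2 : ℝ) • ExteriorAlgebra.ι ℝ v) * (unitTrivector + hodgeDualVec p) *
        (1 + (1 / 2 : ℝ) • ExteriorAlgebra.ι ℝ v)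
      = unitTrivector + hodgeDualVec p + ⟪p, v⟫ • unitTrivector := by
  set A := ExteriorAlgebra.ι ℝ (stdBasis 0) with hA
  set B := ExteriorAlgebra.ι ℝ (stdBasis 1) with hB
  set C := ExteriorAlgebra.ι ℝ (stdBasis 2) with hC
  have hAA : A * A = 0 := ExteriorAlgebra.ι_sq_zero _
  have hBB : B * B = 0 := ExteriorAlgebra.ι_sq_zero _
  have hCC : C * C = 0 := ExteriorAlgebra.ι_sq_zero _
  have hAA' : ∀ x, A * (A * x) = 0 := fun x => by rw [← mul_assoc, hAA, zero_mul]
  have hBB' : ∀ x, B * (B * x) = 0 := fun x => by rw [← mul_assoc, hBB, zero_mul]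
  have hCC' : ∀ x, C * (C * x) = 0 := fun x => by rw [← mul_assoc, hCC, zero_mul]
  have hBA : B * A = -(A * B) := ι_swap _ _
  have hCA : C * A = -(A * C) := ι_swap _ _
  have hCB : C * B = -(B * C) := ι_swap _ _
  have hBA' : ∀ x, B * (A * x) = -(A * (B * x)) := fun x => by
    rw [← mul_assoc, hBA, ← mul_assoc, neg_mul]
  have hCA' : ∀ x, C * (A * x) = -(A * (C * x)) := fun x => by
    rw [← mul_assoc, hCA, ← mul_assoc, neg_mul]
  have hCB' : ∀ x, C * (B * x) = -(B * (C * x)) := fun x => by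
    rw [← mul_assoc, hCB, ← mul_assoc, neg_mul]
  have hv : ExteriorAlgebra.ι ℝ v = v 0 • A + v 1 • B + v 2 • C := by
    rw [hA, hB, hC, ← map_smul, ← map_smul, ← map_smul, ← map_add, ← map_add, ← v_decomp]
  have hip : ⟪p, v⟫ = p 0 * v 0 + p 1 * v 1 + p 2 * v 2 := by
    simp [PiLp.inner_apply, Fin.sum_univ_three, RCLike.inner_apply, mul_comm]
  rw [hv, hip, unitTrivector, hodgeDualVec, ← hA, ← hB, ← hC]
  simp only [mul_add, add_mul, smul_mul_assoc, mul_smul_comm, smul_smul, smul_add,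
    mul_assoc, one_mul, mul_one, smul_neg, neg_smul, mul_neg, neg_mul, neg_add_rev, neg_neg,
    hAA, hBB, hCC, hAA', hBB', hCC', hBA, hCA, hCB, hBA', hCA', hCB',
    smul_zero, add_zero, zero_add, mul_zero, zero_mul]
  module

end
end

section
/- Let u, v ∈ EuclideanSpace ℝ (Fin 3). Define R₁ := (1/2)•( (E(u)+E*(u))∘(E(v)+E*(v)) − (E(v)+E*(v))∘(E(u)+E*(u)) ) and R₂ := (1/2)•( (E(u)−E*(u))∘(E(v)−E*(v)) − (E(v)−E*(v))∘(E(u)−E*(u)) ). Then R₁∘R₁ = R₂∘R₂ = (⟨u,v⟩² − ‖u‖²‖v‖²) • id. In particular, if u and v are linearly independent then R₁² = R₂² = −‖u∧v‖² • id is a negative multiple of the identity. -/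
/-!
With `Γ±(x) = E(x) ± E*(x)`, the canonical anticommutation relations of exterior multiplication
and contraction give the Clifford relations `Γ±(u) Γ±(v) + Γ±(v) Γ±(u) = ±2⟪u, v⟫`.
For any `a, b` with `a² = α`, `b² = β`, `ab + ba = 2γ` (scalars), the half-commutator is
`ab - γ`, and `abab = a(2γ - ab)b = 2γ ab - αβ` shows that it squares to `γ² - αβ`.
Both sign choices give `⟪u, v⟫² - ‖u‖²‖v‖²`.
-/

open scoped RealInnerProductSpace

noncomputable section

section CharNeTwo

variable {K : Type*} [Field K] [NeZero (2 : K)]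

theorem eq_smul_of_add_self_eq_smul {M : Type*} [AddCommGroup M] [Module K M] {x y : M} {α : K}
    (h : x + x = (2 * α) • y) : x = α • y := by
  rw [← two_smul K, mul_smul] at h
  exact smul_right_injective M two_ne_zero h

variable {S : Type*} [Ring S] [Algebra K S]

theorem half_commutator_eq {a b : S} {γ : K} (hab : a * b + b * a = (2 * γ) • 1) :
    (1 / 2 : K) • (a * b - b * a) = a * b - γ • 1 := by
  rw [eq_sub_of_add_eq' hab, sub_sub_eq_add_sub, ← two_smul K (a * b), mul_smul, ← smul_sub,
    smul_smul, one_div, inv_mul_cancel₀ two_ne_zero, one_smul]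

theorem half_commutator_mul_self {a b : S} {α β γ : K} (ha : a * a = α • 1) (hb : b * b = β • 1)
    (hab : a * b + b * a = (2 * γ) • 1) :
    (1 / 2 : K) • (a * b - b * a) * ((1 / 2 : K) • (a * b - b * a)) = (γ ^ 2 - α * β) • 1 := by
  have habab : a * b * (a * b) = (2 * γ) • (a * b) - (α * β) • 1 := by
    calc a * b * (a * b) = a * (b * a) * b := by noncomm_ring
      _ = a * ((2 * γ) • 1 - a * b) * b := by rw [eq_sub_of_add_eq' hab]
      _ = (2 * γ) • (a * b) - (a * a) * (b * b) := by noncomm_ring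
      _ = (2 * γ) • (a * b) - (α * β) • 1 := by rw [ha, hb, smul_mul_smul_comm, one_mul]
  rw [half_commutator_eq hab]
  simp only [sub_mul, mul_sub, smul_mul_assoc, mul_smul_comm, one_mul, mul_one, habab]
  module

end CharNeTwo

theorem wedgeOp_mul_wedgeOp_add_swap (u v : EuclideanSpace ℝ (Fin 3)) :
    wedgeOp u * wedgeOp v + wedgeOp v * wedgeOp u = 0 := by
  refine LinearMap.ext fun x => ?_
  simp only [wedgeOp, LinearMap.add_apply, Module.End.mul_apply, LinearMap.mulLeft_apply,
    ← mul_assoc, ← add_mul, ExteriorAlgebra.ι_add_mul_swap, zero_mul, LinearMap.zero_apply]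

theorem contrOp_mul_contrOp_add_swap (u v : EuclideanSpace ℝ (Fin 3)) :
    contrOp u * contrOp v + contrOp v * contrOp u = 0 := by
  refine LinearMap.ext fun x => ?_
  simp only [contrOp, LinearMap.add_apply, Module.End.mul_apply, LinearMap.zero_apply]
  rw [CliffordAlgebra.contractLeft_comm, neg_add_cancel]

theorem contrOp_mul_wedgeOp_add_swap (u v : EuclideanSpace ℝ (Fin 3)) :
    contrOp u * wedgeOp v + wedgeOp v * contrOp u = ⟪u, v⟫ • 1 := by
  refine LinearMap.ext fun x => ?_
  simp only [contrOp, wedgeOp, LinearMap.add_apply, Module.End.mul_apply, LinearMap.mulLeft_apply,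
    CliffordAlgebra.contractLeft_ι_mul, sub_add_cancel, LinearMap.smul_apply, Module.End.one_apply,
    innerₗ_apply_apply]

theorem wedgeOp_add_contrOp_mul_add_swap (u v : EuclideanSpace ℝ (Fin 3)) :
    (wedgeOp u + contrOp u) * (wedgeOp v + contrOp v)
      + (wedgeOp v + contrOp v) * (wedgeOp u + contrOp u) = (2 * ⟪u, v⟫) • 1 := by
  calc _ = (wedgeOp u * wedgeOp v + wedgeOp v * wedgeOp u)
        + (contrOp u * contrOp v + contrOp v * contrOp u)
        + (contrOp u * wedgeOp v + wedgeOp v * contrOp u)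
        + (contrOp v * wedgeOp u + wedgeOp u * contrOp v) := by
          simp only [add_mul, mul_add]; abel
    _ = (2 * ⟪u, v⟫) • 1 := by
      rw [wedgeOp_mul_wedgeOp_add_swap, contrOp_mul_contrOp_add_swap, contrOp_mul_wedgeOp_add_swap,
        contrOp_mul_wedgeOp_add_swap, real_inner_comm u v]
      module

theorem wedgeOp_sub_contrOp_mul_add_swap (u v : EuclideanSpace ℝ (Fin 3)) :
    (wedgeOp u - contrOp u) * (wedgeOp v - contrOp v)
      + (wedgeOp v - contrOp v) * (wedgeOp u - contrOp u) = (2 * -⟪u, v⟫) • 1 := by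
  calc _ = (wedgeOp u * wedgeOp v + wedgeOp v * wedgeOp u)
        + (contrOp u * contrOp v + contrOp v * contrOp u)
        - (contrOp u * wedgeOp v + wedgeOp v * contrOp u)
        - (contrOp v * wedgeOp u + wedgeOp u * contrOp v) := by
          simp only [sub_mul, mul_sub]; abel
    _ = (2 * -⟪u, v⟫) • 1 := by
      rw [wedgeOp_mul_wedgeOp_add_swap, contrOp_mul_contrOp_add_swap, contrOp_mul_wedgeOp_add_swap,
        contrOp_mul_wedgeOp_add_swap, real_inner_comm u v]
      module

theorem wedgeOp_add_contrOp_mul_self (u : EuclideanSpace ℝ (Fin 3)) :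
    (wedgeOp u + contrOp u) * (wedgeOp u + contrOp u) = ‖u‖ ^ 2 • 1 := by
  rw [← real_inner_self_eq_norm_sq]
  exact eq_smul_of_add_self_eq_smul (wedgeOp_add_contrOp_mul_add_swap u u)

theorem wedgeOp_sub_contrOp_mul_self (u : EuclideanSpace ℝ (Fin 3)) :
    (wedgeOp u - contrOp u) * (wedgeOp u - contrOp u) = (-‖u‖ ^ 2) • 1 := by
  rw [← real_inner_self_eq_norm_sq]
  exact eq_smul_of_add_self_eq_smul (wedgeOp_sub_contrOp_mul_add_swap u u)

/-- `R₁² = R₂² = (⟨u,v⟩² − ‖u‖²‖v‖²) • id`. -/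
theorem rotGen_sq (u v : EuclideanSpace ℝ (Fin 3)) :
    rotGen1 u v ∘ₗ rotGen1 u v = (⟪u, v⟫ ^ 2 - ‖u‖ ^ 2 * ‖v‖ ^ 2) • LinearMap.id ∧
      rotGen2 u v ∘ₗ rotGen2 u v = (⟪u, v⟫ ^ 2 - ‖u‖ ^ 2 * ‖v‖ ^ 2) • LinearMap.id := by
  constructor
  · exact half_commutator_mul_self (wedgeOp_add_contrOp_mul_self u)
      (wedgeOp_add_contrOp_mul_self v) (wedgeOp_add_contrOp_mul_add_swap u v)
  · have h := half_commutator_mul_self (wedgeOp_sub_contrOp_mul_self u)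
      (wedgeOp_sub_contrOp_mul_self v) (wedgeOp_sub_contrOp_mul_add_swap u v)
    rwa [neg_sq, neg_mul_neg] at h

end
end

section
/- Let u, v ∈ EuclideanSpace ℝ (Fin 3). Define R₁ := (1/2)•( (E(u)+E*(u))∘(E(v)+E*(v)) − (E(v)+E*(v))∘(E(u)+E*(u)) ) and R₂ := (1/2)•( (E(u)−E*(u))∘(E(v)−E*(v)) − (E(v)−E*(v))∘(E(u)−E*(u)) ). Then R₁ and R₂ commute: R₁∘R₂ = R₂∘R₁ (this holds for arbitrary u and v, with no orthogonality assumption). -/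
open scoped RealInnerProductSpace

noncomputable section

/-! ### Auxiliary lemmas -/

/-- Exterior multiplications anticommute. -/
lemma wedgeOp_swap (u v : EuclideanSpace ℝ (Fin 3)) :
    wedgeOp v * wedgeOp u = -(wedgeOp u * wedgeOp v) := by
  show (LinearMap.mulLeft ℝ _) ∘ₗ (LinearMap.mulLeft ℝ _)
      = -((LinearMap.mulLeft ℝ _) ∘ₗ (LinearMap.mulLeft ℝ _))
  rw [← LinearMap.mulLeft_mul, ← LinearMap.mulLeft_mul]
  have h : ExteriorAlgebra.ι ℝ v * ExteriorAlgebra.ι ℝ u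
      = -(ExteriorAlgebra.ι ℝ u * ExteriorAlgebra.ι ℝ v) :=
    eq_neg_of_add_eq_zero_left (ExteriorAlgebra.ι_add_mul_swap v u)
  rw [h]
  exact LinearMap.ext fun x => by simp [mul_assoc]

/-- Square of exterior multiplication vanishes. -/
lemma wedgeOp_sq (u : EuclideanSpace ℝ (Fin 3)) : wedgeOp u * wedgeOp u = 0 := by
  show (LinearMap.mulLeft ℝ _) ∘ₗ (LinearMap.mulLeft ℝ _) = 0
  rw [← LinearMap.mulLeft_mul, ExteriorAlgebra.ι_sq_zero, LinearMap.mulLeft_zero_eq_zero]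

/-- Contractions anticommute. -/
lemma contrOp_swap (u v : EuclideanSpace ℝ (Fin 3)) :
    contrOp v * contrOp u = -(contrOp u * contrOp v) :=
  LinearMap.ext fun x => CliffordAlgebra.contractLeft_comm _ _ x

/-- Square of contraction vanishes. -/
lemma contrOp_sq (u : EuclideanSpace ℝ (Fin 3)) : contrOp u * contrOp u = 0 :=
  LinearMap.ext fun x => CliffordAlgebra.contractLeft_contractLeft _ x

/-- The mixed (anti)commutation relation. -/
lemma contrOp_wedgeOp (u v : EuclideanSpace ℝ (Fin 3)) :
    contrOp u * wedgeOp v = (⟪u, v⟫ : ℝ) •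
        (1 : Module.End ℝ (ExteriorAlgebra ℝ (EuclideanSpace ℝ (Fin 3))))
      - wedgeOp v * contrOp u :=
  LinearMap.ext fun x => by
    have := CliffordAlgebra.contractLeft_ι_mul (d := innerₗ (EuclideanSpace ℝ (Fin 3)) u) v x
    simpa [contrOp, wedgeOp] using this

/-- Abstract ring-theoretic core of the commutation statement. -/
lemma aux_comm {A : Type*} [Ring A] (a b c d K : A)
    (hK : ∀ x : A, K * x = x * K)
    (hA : a * a = 0) (hB : b * b = 0) (hC : c * c = 0) (hD : d * d = 0)
    (hCA : c * a = -(a * c)) (hDB : d * b = -(b * d))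
    (hCB : c * b = K - b * c) (hDA : d * a = K - a * d) :
    ((a + b) * (c + d) - (c + d) * (a + b)) * ((a - b) * (c - d) - (c - d) * (a - b))
      = ((a - b) * (c - d) - (c - d) * (a - b)) * ((a + b) * (c + d) - (c + d) * (a + b)) := by
  set P : A := a * c + b * d with hP
  set Q : A := a * d + b * c with hQ
  -- the two commutators, simplified
  have eX : (a + b) * (c + d) - (c + d) * (a + b) = P + P + (Q + Q) - (K + K) := by
    have ex : (a + b) * (c + d) - (c + d) * (a + b)
        = (a * c - c * a) + (b * d - d * b) + (a * d - d * a) + (b * c - c * b) := by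
      noncomm_ring
    rw [ex, hCA, hDB, hCB, hDA, hP, hQ]
    abel
  have eY : (a - b) * (c - d) - (c - d) * (a - b) = P + P - (Q + Q) + (K + K) := by
    have ey : (a - b) * (c - d) - (c - d) * (a - b)
        = (a * c - c * a) + (b * d - d * b) - (a * d - d * a) - (b * c - c * b) := by
      noncomm_ring
    rw [ey, hCA, hDB, hCB, hDA, hP, hQ]
    abel
  -- the eight monomial computations
  have t1 : a * c * (a * d) = 0 := by
    have h1 : a * c * (a * d) = a * (c * a) * d := by noncomm_ring
    have h2 : a * (-(a * c)) * d = -(a * a * (c * d)) := by noncomm_ring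
    rw [h1, hCA, h2, hA, zero_mul, neg_zero]
  have t2 : a * d * (a * c) = K * (a * c) := by
    have h1 : a * d * (a * c) = a * (d * a) * c := by noncomm_ring
    have h2 : a * (K - a * d) * c = a * K * c - a * a * (d * c) := by noncomm_ring
    rw [h1, hDA, h2, hA, zero_mul, sub_zero, ← hK a, mul_assoc]
  have t3 : a * c * (b * c) = K * (a * c) := by
    have h1 : a * c * (b * c) = a * (c * b) * c := by noncomm_ring
    have h2 : a * (K - b * c) * c = a * K * c - a * b * (c * c) := by noncomm_ring
    rw [h1, hCB, h2, hC, mul_zero, sub_zero, ← hK a, mul_assoc]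
  have t4 : b * c * (a * c) = 0 := by
    have h1 : b * c * (a * c) = b * (c * a) * c := by noncomm_ring
    have h2 : b * (-(a * c)) * c = -(b * a * (c * c)) := by noncomm_ring
    rw [h1, hCA, h2, hC, mul_zero, neg_zero]
  have t5 : b * d * (a * d) = K * (b * d) := by
    have h1 : b * d * (a * d) = b * (d * a) * d := by noncomm_ring
    have h2 : b * (K - a * d) * d = b * K * d - b * a * (d * d) := by noncomm_ring
    rw [h1, hDA, h2, hD, mul_zero, sub_zero, ← hK b, mul_assoc]
  have t6 : a * d * (b * d) = 0 := by
    have h1 : a * d * (b * d) = a * (d * b) * d := by noncomm_ring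
    have h2 : a * (-(b * d)) * d = -(a * b * (d * d)) := by noncomm_ring
    rw [h1, hDB, h2, hD, mul_zero, neg_zero]
  have t7 : b * d * (b * c) = 0 := by
    have h1 : b * d * (b * c) = b * (d * b) * c := by noncomm_ring
    have h2 : b * (-(b * d)) * c = -(b * b * (d * c)) := by noncomm_ring
    rw [h1, hDB, h2, hB, zero_mul, neg_zero]
  have t8 : b * c * (b * d) = K * (b * d) := by
    have h1 : b * c * (b * d) = b * (c * b) * d := by noncomm_ring
    have h2 : b * (K - b * c) * d = b * K * d - b * b * (c * d) := by noncomm_ring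
    rw [h1, hCB, h2, hB, zero_mul, sub_zero, ← hK b, mul_assoc]
  -- P and Q commute
  have hPQ : P * Q = Q * P := by
    have el : P * Q = a * c * (a * d) + a * c * (b * c) + b * d * (a * d) + b * d * (b * c) := by
      rw [hP, hQ]; noncomm_ring
    have er : Q * P = a * d * (a * c) + a * d * (b * d) + b * c * (a * c) + b * c * (b * d) := by
      rw [hP, hQ]; noncomm_ring
    rw [el, er, t1, t2, t3, t4, t5, t6, t7, t8]
    abel
  -- conclude
  have hKP := hK P
  rw [eX, eY]
  have l : (P + P + (Q + Q) - (K + K)) * (P + P - (Q + Q) + (K + K))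
      = 4 * (P * P) - 4 * (P * Q) + 4 * (P * K) + 4 * (Q * P) - 4 * (Q * Q) + 4 * (Q * K)
        - 4 * (K * P) + 4 * (K * Q) - 4 * (K * K) := by noncomm_ring
  have r : (P + P - (Q + Q) + (K + K)) * (P + P + (Q + Q) - (K + K))
      = 4 * (P * P) + 4 * (P * Q) - 4 * (P * K) - 4 * (Q * P) - 4 * (Q * Q) + 4 * (Q * K)
        + 4 * (K * P) + 4 * (K * Q) - 4 * (K * K) := by noncomm_ring
  rw [l, r, hPQ, hKP]
  abel

/-- `R₁` and `R₂` commute, for arbitrary `u` and `v`. -/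
theorem rotGen_commute (u v : EuclideanSpace ℝ (Fin 3)) :
    rotGen1 u v ∘ₗ rotGen2 u v = rotGen2 u v ∘ₗ rotGen1 u v := by
  have hK : ∀ x : Module.End ℝ (ExteriorAlgebra ℝ (EuclideanSpace ℝ (Fin 3))),
      ((⟪u, v⟫ : ℝ) • (1 : Module.End ℝ (ExteriorAlgebra ℝ (EuclideanSpace ℝ (Fin 3))))) * x
        = x * ((⟪u, v⟫ : ℝ) • 1) := fun x => by
    rw [smul_mul_assoc, one_mul, mul_smul_comm, mul_one]
  have hCB : wedgeOp v * contrOp u = (⟪u, v⟫ : ℝ) • 1 - contrOp u * wedgeOp v := by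
    rw [contrOp_wedgeOp u v]; abel
  have hDA : contrOp v * wedgeOp u = (⟪u, v⟫ : ℝ) • 1 - wedgeOp u * contrOp v := by
    rw [real_inner_comm]; exact contrOp_wedgeOp v u
  have key := aux_comm (wedgeOp u) (contrOp u) (wedgeOp v) (contrOp v)
    ((⟪u, v⟫ : ℝ) • 1) hK (wedgeOp_sq u) (contrOp_sq u) (wedgeOp_sq v) (contrOp_sq v)
    (wedgeOp_swap u v) (contrOp_swap u v) hCB hDA
  simp only [rotGen1, rotGen2, ← Module.End.mul_eq_comp]
  rw [smul_mul_assoc, smul_mul_assoc, mul_smul_comm, mul_smul_comm, key]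

end
end

section
/- (Incidence of a point with a line.) Let p, q, x ∈ EuclideanSpace ℝ (Fin 3) with p ≠ q, and work in the exterior algebra Λ = ExteriorAlgebra ℝ (EuclideanSpace ℝ (Fin 3)). Then the two conditions ι(p)*ι(q) + ι(q−p)*ι(x) = 0 (vanishing of the bivector part of 𝓛⌣X) and ι(p)*ι(q)*ι(x) = 0 (vanishing of the trivector part of 𝓛⌣X) hold simultaneously if and only if there exists t ∈ ℝ such that x = p + t•(q − p). That is, 𝓛⌣X = 0 for the biparavector 𝓛 = (q−p) + p∧q representing the line segment from P to Q and the paravector X = 1 + x exactly when the point X lies on the line through P and Q. -/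
/-!
Translating the origin to `p`, the bivector part of `𝓛⌣X` is `(q - p) ∧ (x - p)` and the trivector
part is `p ∧ (q - p) ∧ (x - p)`, so both vanish as soon as the bivector part does. Over a field, a
wedge `u ∧ w` with `u ≠ 0` vanishes exactly when `w` is a multiple of `u`, because the wedges of a
linearly independent family are linearly independent.
-/

namespace ExteriorAlgebra

section CommRing

variable {R M : Type*} [CommRing R] [AddCommGroup M] [Module R M]

theorem ι_mul_ι_mul_ι_self (p q : M) : ι R p * ι R q * ι R p = 0 := by
  rw [mul_assoc, eq_neg_of_add_eq_zero_left (ι_add_mul_swap q p), mul_neg, ← mul_assoc,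
    ι_sq_zero, zero_mul, neg_zero]

theorem ι_mul_ι_add_ι_sub_mul_ι (p q x : M) :
    ι R p * ι R q + ι R (q - p) * ι R x = ι R (q - p) * ι R (x - p) := by
  simp only [map_sub, sub_mul, mul_sub, ι_sq_zero, eq_neg_of_add_eq_zero_left (ι_add_mul_swap q p)]
  abel

theorem ι_mul_ι_mul_ι_eq_ι_mul_ι_sub_mul_ι_sub (p q x : M) :
    ι R p * ι R q * ι R x = ι R p * (ι R (q - p) * ι R (x - p)) := by
  rw [← mul_assoc, map_sub, mul_sub, ι_sq_zero, sub_zero, map_sub, mul_sub, ι_mul_ι_mul_ι_self,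
    sub_zero]

end CommRing

section Field

variable {K V : Type*} [Field K] [AddCommGroup V] [Module K V]

theorem ι_mul_ι_ne_zero_of_linearIndependent {u w : V} (h : LinearIndependent K ![u, w]) :
    ι K u * ι K w ≠ 0 := by
  let s : Set.powersetCard (Fin 2) 2 := Set.powersetCard.ofCard (s := Finset.univ) rfl
  have hs : ⇑(Set.powersetCard.ofFinEmbEquiv.symm s) = id :=
    (Finset.orderEmbOfFin_unique _ (fun _ => Finset.mem_univ _) strictMono_id).symm
  have hne := (exteriorPower.ιMulti_family_linearIndependent_field (n := 2) h).ne_zero s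
  rw [exteriorPower.ιMulti_family.eq_1, hs, Function.comp_id, ne_eq, ← Submodule.coe_eq_zero,
    exteriorPower.ιMulti_apply_coe, ιMulti_apply] at hne
  simpa [List.ofFn_succ] using hne

theorem ι_mul_ι_eq_zero_iff {u : V} (hu : u ≠ 0) (w : V) :
    ι K u * ι K w = 0 ↔ ∃ t : K, w = t • u := by
  constructor
  · intro h
    by_contra! hw
    exact ι_mul_ι_ne_zero_of_linearIndependent
      ((LinearIndependent.pair_iff' hu).2 fun t => (hw t).symm) h
  · rintro ⟨t, rfl⟩
    rw [map_smul, mul_smul_comm, ι_sq_zero, smul_zero]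

end Field

end ExteriorAlgebra

/-- incidence of a point with a line. For distinct points located at
`p` and `q`, the biparavector equation `𝓛⌣X = 0` (vanishing of the bivector part
`p∧q + (q−p)∧x` and of the trivector part `p∧q∧x`) holds exactly when `x` lies on
the line through `p` and `q`. -/
theorem point_on_line_iff (p q x : EuclideanSpace ℝ (Fin 3)) (hpq : p ≠ q) :
    (ExteriorAlgebra.ι ℝ p * ExteriorAlgebra.ι ℝ q +
          ExteriorAlgebra.ι ℝ (q - p) * ExteriorAlgebra.ι ℝ x = 0 ∧
        ExteriorAlgebra.ι ℝ p * ExteriorAlgebra.ι ℝ q * ExteriorAlgebra.ι ℝ x = 0) ↔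
      ∃ t : ℝ, x = p + t • (q - p) := by
  rw [ExteriorAlgebra.ι_mul_ι_mul_ι_eq_ι_mul_ι_sub_mul_ι_sub,
    ExteriorAlgebra.ι_mul_ι_add_ι_sub_mul_ι,
    and_iff_left_of_imp fun h => by rw [h, mul_zero],
    ExteriorAlgebra.ι_mul_ι_eq_zero_iff (sub_ne_zero.2 hpq.symm)]
  simp_rw [sub_eq_iff_eq_add']
end

section
/- (Incidence of a point with a plane.) Let p, q, r ∈ EuclideanSpace ℝ (Fin 3) be linearly independent and let x ∈ EuclideanSpace ℝ (Fin 3). Working in Λ = ExteriorAlgebra ℝ (EuclideanSpace ℝ (Fin 3)), the equation ι(q)*ι(r)*ι(x) − ι(p)*ι(r)*ι(x) + ι(p)*ι(q)*ι(x) = ι(p)*ι(q)*ι(r) holds if and only if there exist t, u ∈ ℝ such that x = p + t•(q − p) + u•(r − p). That is, 𝓟⌣X† = 0 for the triparavector 𝓟 representing the plane fragment through the points located at p, q, r exactly when the point located at x lies on the plane through those three points. -/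
/-!
Subtracting `p∧q∧r`, the equation becomes `(q - p)∧(r - p)∧(x - p) = 0`. Over a field a wedge
of vectors vanishes exactly when they are linearly dependent, and `q - p`, `r - p` are
independent, so the equation says that `x - p` lies in the span of `q - p` and `r - p`.
-/

open ExteriorAlgebra

namespace ExteriorAlgebra

section CommRing

variable {R M : Type*} [CommRing R] [AddCommGroup M] [Module R M]

theorem ι_mul_ι_comm (a b : M) : ι R a * ι R b = -(ι R b * ι R a) :=
  eq_neg_of_add_eq_zero_left (ι_add_mul_swap a b)

theorem mul_ι_mul_ι_comm (y : ExteriorAlgebra R M) (a b : M) :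
    y * ι R a * ι R b = -(y * ι R b * ι R a) := by
  rw [mul_assoc, ι_mul_ι_comm a b, mul_neg, mul_assoc]

theorem ι_sub_mul_ι_sub_mul_ι_sub (p q r x : M) :
    ι R (q - p) * ι R (r - p) * ι R (x - p) =
      ι R q * ι R r * ι R x - ι R p * ι R r * ι R x + ι R p * ι R q * ι R x -
        ι R p * ι R q * ι R r := by
  have hqr : ι R (q - p) * ι R (r - p) = ι R q * ι R r - ι R p * ι R r + ι R p * ι R q := by
    simp only [map_sub, mul_sub, sub_mul, ι_sq_zero, ι_mul_ι_comm q p]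
    abel
  have hqrp : ι R q * ι R r * ι R p = ι R p * ι R q * ι R r := by
    rw [mul_ι_mul_ι_comm, ι_mul_ι_comm q p, neg_mul, neg_neg]
  have hprp : ι R p * ι R r * ι R p = 0 := by
    rw [mul_ι_mul_ι_comm, ι_sq_zero, zero_mul, neg_zero]
  have hpqp : ι R p * ι R q * ι R p = 0 := by
    rw [mul_ι_mul_ι_comm, ι_sq_zero, zero_mul, neg_zero]
  rw [hqr, map_sub, mul_sub]
  simp only [add_mul, sub_mul, hqrp, hprp, hpqp]
  abel

end CommRing

section Field

variable {K V : Type*} [Field K] [AddCommGroup V] [Module K V]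

theorem ιMulti_ne_zero_of_linearIndependent {n : ℕ} {v : Fin n → V}
    (hv : LinearIndependent K v) : ιMulti K n v ≠ 0 := by
  -- `ιMulti K n v` is the member of the independent family `ιMulti_family K n v` at `univ`.
  have h := (exteriorPower.ιMulti_family_linearIndependent_field (n := n) hv).ne_zero
    (Set.powersetCard.ofFinEmbEquiv (RelEmbedding.refl (α := Fin n) (· ≤ ·)))
  rwa [exteriorPower.ιMulti_family, Equiv.symm_apply_apply, ne_eq,
    ← Submodule.coe_eq_zero, exteriorPower.ιMulti_apply_coe] at h

theorem ιMulti_eq_zero_iff {n : ℕ} {v : Fin n → V} :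
    ιMulti K n v = 0 ↔ ¬LinearIndependent K v :=
  ⟨fun h hv => ιMulti_ne_zero_of_linearIndependent hv h, (ιMulti K n).map_linearDependent v⟩

theorem ι_mul_ι_mul_ι_eq_zero_iff {a b c : V} :
    ι K a * ι K b * ι K c = 0 ↔ ¬LinearIndependent K ![a, b, c] := by
  rw [← ιMulti_eq_zero_iff]
  simp [ιMulti_apply, mul_assoc]

end Field

end ExteriorAlgebra

theorem LinearIndependent.pair_sub_sub {R M : Type*} [CommRing R] [AddCommGroup M] [Module R M]
    {p q r : M} (h : LinearIndependent R ![p, q, r]) : LinearIndependent R ![q - p, r - p] := by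
  rw [LinearIndependent.pair_iff]
  intro s t hst
  have := Fintype.linearIndependent_iff.mp h ![-(s + t), s, t]
    (by simp only [Fin.sum_univ_three, Matrix.cons_val]; linear_combination (norm := module) hst)
  exact ⟨this 1, this 2⟩

theorem mem_span_pair_iff_not_linearIndependent {K V : Type*} [DivisionRing K] [AddCommGroup V]
    [Module K V] {a b c : V} (hab : LinearIndependent K ![a, b]) :
    c ∈ Submodule.span K {a, b} ↔ ¬LinearIndependent K ![a, b, c] := by
  rw [← Matrix.range_cons_cons_empty a b ![], show ![a, b, c] = Fin.snoc ![a, b] c by simp]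
  exact ⟨fun hc hi => (linearIndependent_finSnoc.mp hi).2 hc,
    fun hc => by_contra fun hn => hc (hab.finSnoc hn)⟩

/-- incidence of a point with a plane. For linearly independent
`p`, `q`, `r`, the triparavector equation `𝓟⌣X† = 0`, i.e.
`q∧r∧x − p∧r∧x + p∧q∧x = p∧q∧r`, holds exactly when `x` lies on the plane
through the points located at `p`, `q` and `r`. -/
theorem point_on_plane_iff (p q r x : EuclideanSpace ℝ (Fin 3))
    (h : LinearIndependent ℝ ![p, q, r]) :
    (ExteriorAlgebra.ι ℝ q * ExteriorAlgebra.ι ℝ r * ExteriorAlgebra.ι ℝ x -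
          ExteriorAlgebra.ι ℝ p * ExteriorAlgebra.ι ℝ r * ExteriorAlgebra.ι ℝ x +
          ExteriorAlgebra.ι ℝ p * ExteriorAlgebra.ι ℝ q * ExteriorAlgebra.ι ℝ x
        = ExteriorAlgebra.ι ℝ p * ExteriorAlgebra.ι ℝ q * ExteriorAlgebra.ι ℝ r) ↔
      ∃ t u : ℝ, x = p + t • (q - p) + u • (r - p) := by
  rw [← sub_eq_zero, ← ι_sub_mul_ι_sub_mul_ι_sub, ι_mul_ι_mul_ι_eq_zero_iff,
    ← mem_span_pair_iff_not_linearIndependent h.pair_sub_sub, Submodule.mem_span_pair]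
  refine exists₂_congr fun t u => ?_
  rw [eq_sub_iff_add_eq', add_assoc, eq_comm]
end
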